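/- arXiv:1709.07998 — 6 statements merged into one kernel-verified Lean document; each statement's English description precedes it below -/
import Mathlib

section
/- If X is a Hausdorff space and D ⊆ X, then |closure(D)| ≤ |D|^{wt(X)·ψ_c(X)}. -/
open Cardinal Set TopologicalSpace

universe u

/-- The tightness `t(X)`: the least infinite cardinal `κ` such that whenever
`x ∈ closure A` there is `B ⊆ A` with `#B ≤ κ` and `x ∈ closure B`. -/
noncomputable def tightness (X : Type u) [TopologicalSpace X] : Cardinal.{u} :=
  sInf {κ : Cardinal.{u} | ℵ₀ ≤ κ ∧ ∀ (A : Set X) (x : X), x ∈ closure A →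
    ∃ B ⊆ A, #B ≤ κ ∧ x ∈ closure B}

/-- The `κ`-closure of a set `A`. -/
noncomputable def clk {X : Type u} [TopologicalSpace X] (κ : Cardinal.{u}) (A : Set X) : Set X :=
  ⋃ (B : Set X) (_ : B ⊆ A ∧ #B ≤ κ), closure B

/-- A cover `𝒞` witnessing that `wt X ≤ κ`. -/
noncomputable def IsWtWitness {X : Type u} [TopologicalSpace X] (κ : Cardinal.{u}) (𝒞 : Set (Set X)) : Prop :=
  ⋃₀ 𝒞 = Set.univ ∧ #𝒞 ≤ 2 ^ κ ∧ ∀ C ∈ 𝒞, tightness ↥C ≤ κ ∧ clk (2 ^ κ) C = Set.univ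

/-- The weak tightness `wt(X)`. -/
noncomputable def wt (X : Type u) [TopologicalSpace X] : Cardinal.{u} :=
  sInf {κ : Cardinal.{u} | ℵ₀ ≤ κ ∧ ∃ 𝒞 : Set (Set X), IsWtWitness κ 𝒞}

/-- The Lindelöf number `L(X)`. -/
noncomputable def LindelofNumber (X : Type u) [TopologicalSpace X] : Cardinal.{u} :=
  sInf {κ : Cardinal.{u} | ℵ₀ ≤ κ ∧ ∀ 𝒰 : Set (Set X), (∀ U ∈ 𝒰, IsOpen U) →
    ⋃₀ 𝒰 = Set.univ → ∃ 𝒱 ⊆ 𝒰, #𝒱 ≤ κ ∧ ⋃₀ 𝒱 = Set.univ}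

/-- The pseudocharacter `ψ(X)`. -/
noncomputable def psi (X : Type u) [TopologicalSpace X] : Cardinal.{u} :=
  sInf {κ : Cardinal.{u} | ℵ₀ ≤ κ ∧ ∀ x : X, ∃ 𝒰 : Set (Set X),
    #𝒰 ≤ κ ∧ (∀ U ∈ 𝒰, IsOpen U ∧ x ∈ U) ∧ ⋂₀ 𝒰 = {x}}

/-- The closed pseudocharacter `ψ_c(X)`. -/
noncomputable def psic (X : Type u) [TopologicalSpace X] : Cardinal.{u} :=
  sInf {κ : Cardinal.{u} | ℵ₀ ≤ κ ∧ ∀ x : X, ∃ 𝒰 : Set (Set X),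
    #𝒰 ≤ κ ∧ (∀ U ∈ 𝒰, IsOpen U ∧ x ∈ U) ∧ (⋂ U ∈ 𝒰, closure U) = {x}}

/-- `A` is `𝒞`-saturated: `A ∩ C` is dense in `A` for every `C ∈ 𝒞`. -/
noncomputable def Saturated {X : Type u} [TopologicalSpace X] (𝒞 : Set (Set X)) (A : Set X) : Prop :=
  ∀ C ∈ 𝒞, A ⊆ closure (A ∩ C)

/-- The π-character `πχ(x, X)` of a point: least cardinality of a local π-base at `x`. -/
noncomputable def piCharPt {X : Type u} [TopologicalSpace X] (x : X) : Cardinal.{u} :=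
  sInf {κ : Cardinal.{u} | ∃ ℬ : Set (Set X), #ℬ ≤ κ ∧
    (∀ B ∈ ℬ, IsOpen B ∧ B.Nonempty) ∧ ∀ U : Set X, IsOpen U → x ∈ U → ∃ B ∈ ℬ, B ⊆ U}

/-- The π-character `πχ(X)`. -/
noncomputable def piChar (X : Type u) [TopologicalSpace X] : Cardinal.{u} :=
  ⨆ x : X, piCharPt x

/-- The character `χ(x, X)` of a point: least cardinality of a local base at `x`. -/
noncomputable def charPt {X : Type u} [TopologicalSpace X] (x : X) : Cardinal.{u} :=
  sInf {κ : Cardinal.{u} | ∃ ℬ : Set (Set X), #ℬ ≤ κ ∧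
    (∀ B ∈ ℬ, IsOpen B ∧ x ∈ B) ∧ ∀ U : Set X, IsOpen U → x ∈ U → ∃ B ∈ ℬ, B ⊆ U}

/-- The character `χ(X)`. -/
noncomputable def character (X : Type u) [TopologicalSpace X] : Cardinal.{u} :=
  ⨆ x : X, charPt x

/-- The density `d(X)`: least cardinality of a dense subset. -/
noncomputable def density (X : Type u) [TopologicalSpace X] : Cardinal.{u} :=
  sInf {κ : Cardinal.{u} | ∃ D : Set X, Dense D ∧ #D ≤ κ}

/-- A space is homogeneous if its homeomorphism group acts transitively. -/
noncomputable def Homogeneous (X : Type u) [TopologicalSpace X] : Prop :=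
  ∀ x y : X, ∃ h : X ≃ₜ X, h x = y

/-- A space is power homogeneous if some (nonempty) power of it is homogeneous. -/
noncomputable def PowerHomogeneous (X : Type u) [TopologicalSpace X] : Prop :=
  ∃ I : Type u, Nonempty I ∧ Homogeneous (I → X)

/-- A `G^c_κ`-set: `G = ⋂𝒰 = ⋂_{U ∈ 𝒰} closure U` for a family `𝒰` of `≤ κ` open sets. -/
noncomputable def GcSet {X : Type u} [TopologicalSpace X] (κ : Cardinal.{u}) (G : Set X) : Prop :=
  ∃ 𝒰 : Set (Set X), #𝒰 ≤ κ ∧ (∀ U ∈ 𝒰, IsOpen U) ∧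
    G = ⋂₀ 𝒰 ∧ G = ⋂ U ∈ 𝒰, closure U

/-- A subset is subseparable if it is contained in the closure of a countable set. -/
noncomputable def Subseparable {X : Type u} [TopologicalSpace X] (A : Set X) : Prop :=
  ∃ c : Set X, c.Countable ∧ A ⊆ closure c

/-!
Put `κ = wt X * ψ_c X` and fix a cover `𝒞` witnessing `wt X`. Closing `D` off `ω` times under
"add, for every point `x` and every `C ∈ 𝒞`, a subset of `C` of size `≤ 2 ^ wt X` with `x` in its
closure" gives `G ⊇ D` with `#G ≤ #D ^ κ` such that `G ∩ C` is dense in `G` for every `C ∈ 𝒞`.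
For `x ∈ closure G` and an open `U ∋ x` this puts `x` in the closure of `G ∩ U ∩ C`, where `x ∈ C`,
and the tightness of `C` gives `B ⊆ G ∩ U` with `#B ≤ κ` and `x ∈ closure B`. Doing this for the
`≤ κ` neighbourhoods witnessing `ψ_c` at `x` codes `x` by a `κ`-family of `κ`-subsets of `G`,
so `#(closure D) ≤ (#G ^ κ) ^ κ ≤ #D ^ κ`.
-/

section ClosureOperators

variable {X : Type u} [TopologicalSpace X]

theorem mem_clk_iff {κ : Cardinal.{u}} {A : Set X} {x : X} :
    x ∈ clk κ A ↔ ∃ B ⊆ A, #B ≤ κ ∧ x ∈ closure B := by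
  simp [clk, and_assoc]

theorem clk_mono {κ μ : Cardinal.{u}} (h : κ ≤ μ) (A : Set X) : clk κ A ⊆ clk μ A := fun _ hx =>
  let ⟨B, hBA, hB, hxB⟩ := mem_clk_iff.1 hx
  mem_clk_iff.2 ⟨B, hBA, hB.trans h, hxB⟩

end ClosureOperators

section CardinalFunctions

theorem tightness_le_aleph0_sup_mk (Y : Type u) [TopologicalSpace Y] : tightness Y ≤ ℵ₀ ⊔ #Y :=
  csInf_le' ⟨le_sup_left, fun A _ hx => ⟨A, subset_rfl, le_sup_of_le_right (mk_set_le A), hx⟩⟩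

theorem exists_subset_mk_le_tightness_of_mem_closure {Y : Type u} [TopologicalSpace Y]
    {A : Set Y} {x : Y} (hx : x ∈ closure A) : ∃ B ⊆ A, #B ≤ tightness Y ∧ x ∈ closure B := by
  have hne : {κ : Cardinal.{u} | ℵ₀ ≤ κ ∧ ∀ (A : Set Y) (x : Y), x ∈ closure A →
      ∃ B ⊆ A, #B ≤ κ ∧ x ∈ closure B}.Nonempty :=
    ⟨_, le_sup_left, fun A _ hx => ⟨A, subset_rfl, le_sup_of_le_right (mk_set_le A), hx⟩⟩
  exact (csInf_mem hne).2 A x hx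

theorem isWtWitness_singleton_univ (X : Type u) [TopologicalSpace X] :
    IsWtWitness (ℵ₀ ⊔ #X) {(univ : Set X)} := by
  have hX : #X ≤ 2 ^ (ℵ₀ ⊔ #X) :=
    (cantor #X).le.trans (power_le_power_left two_ne_zero le_sup_right)
  refine ⟨sUnion_singleton _, ?_, ?_⟩
  · rw [mk_singleton, ← power_zero (a := 2)]
    exact power_le_power_left two_ne_zero zero_le
  · rintro C rfl
    refine ⟨(tightness_le_aleph0_sup_mk _).trans (by rw [mk_univ]), ?_⟩
    exact eq_univ_of_forall fun x =>
      mem_clk_iff.2 ⟨univ, subset_rfl, mk_univ.trans_le hX, subset_closure (mem_univ x)⟩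

theorem aleph0_le_wt_and_exists_isWtWitness (X : Type u) [TopologicalSpace X] :
    ℵ₀ ≤ wt X ∧ ∃ 𝒞 : Set (Set X), IsWtWitness (wt X) 𝒞 :=
  csInf_mem (s := {κ | ℵ₀ ≤ κ ∧ ∃ 𝒞 : Set (Set X), IsWtWitness κ 𝒞})
    ⟨_, le_sup_left, _, isWtWitness_singleton_univ X⟩

theorem iInter_closure_of_isOpen_mem_eq_singleton {X : Type u} [TopologicalSpace X] [T2Space X]
    (x : X) : ⋂ U ∈ {U : Set X | IsOpen U ∧ x ∈ U}, closure U = {x} := by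
  refine subset_antisymm (fun y hy => ?_) fun y hy => ?_
  · by_contra hyx
    obtain ⟨U, V, hU, hV, hxU, hyV, hUV⟩ := t2_separation (Ne.symm hyx)
    exact (hUV.closure_left hV).ne_of_mem (mem_iInter₂.1 hy U ⟨hU, hxU⟩) hyV rfl
  · rw [mem_singleton_iff.1 hy]
    exact mem_iInter₂.2 fun U hU => subset_closure hU.2

theorem aleph0_le_psic_and_forall_exists (X : Type u) [TopologicalSpace X] [T2Space X] :
    ℵ₀ ≤ psic X ∧ ∀ x : X, ∃ 𝒰 : Set (Set X),
      #𝒰 ≤ psic X ∧ (∀ U ∈ 𝒰, IsOpen U ∧ x ∈ U) ∧ (⋂ U ∈ 𝒰, closure U) = {x} := by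
  refine csInf_mem (s := {κ | ℵ₀ ≤ κ ∧ ∀ x : X, ∃ 𝒰 : Set (Set X),
      #𝒰 ≤ κ ∧ (∀ U ∈ 𝒰, IsOpen U ∧ x ∈ U) ∧ (⋂ U ∈ 𝒰, closure U) = {x}})
    ⟨ℵ₀ ⊔ #(Set X), le_sup_left, fun x => ⟨_, ?_, fun _ hU => hU,
      iInter_closure_of_isOpen_mem_eq_singleton x⟩⟩
  exact le_sup_of_le_right (mk_set_le _)

end CardinalFunctions

section Saturation

variable {X : Type u} [TopologicalSpace X]

theorem exists_subset_inter_mk_le_tightness_of_mem_closure {A C : Set X} {x : X} (hxC : x ∈ C)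
    (hx : x ∈ closure (A ∩ C)) : ∃ B ⊆ A ∩ C, #B ≤ tightness C ∧ x ∈ closure B := by
  have hx' : (⟨x, hxC⟩ : C) ∈ closure (((↑) : C → X) ⁻¹' A) := by
    rwa [closure_subtype, Subtype.image_preimage_coe, inter_comm]
  obtain ⟨B, hBA, hB, hxB⟩ := exists_subset_mk_le_tightness_of_mem_closure hx'
  refine ⟨(↑) '' B, ?_, mk_image_le.trans hB, closure_subtype.1 hxB⟩
  rw [inter_comm, ← Subtype.image_preimage_coe]
  exact image_mono hBA

namespace Saturated

variable {𝒞 : Set (Set X)} {G : Set X}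

theorem closure_subset (hG : Saturated 𝒞 G) {C : Set X} (hC : C ∈ 𝒞) :
    closure G ⊆ closure (G ∩ C) :=
  closure_minimal (hG C hC) isClosed_closure

theorem inter_isOpen (hG : Saturated 𝒞 G) {U : Set X} (hU : IsOpen U) : Saturated 𝒞 (G ∩ U) :=
  fun C hC y ⟨hyG, hyU⟩ => by
    refine closure_mono (fun z hz => ?_) (hU.inter_closure ⟨hyU, hG C hC hyG⟩)
    exact ⟨⟨hz.2.1, hz.1⟩, hz.2.2⟩

theorem exists_subset_inter_mem_closure (hG : Saturated 𝒞 G) (hcov : ⋃₀ 𝒞 = Set.univ)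
    {κ : Cardinal.{u}} (ht : ∀ C ∈ 𝒞, tightness C ≤ κ) {x : X} (hx : x ∈ closure G) {U : Set X}
    (hU : IsOpen U) (hxU : x ∈ U) : ∃ B ⊆ G ∩ U, #B ≤ κ ∧ x ∈ closure B := by
  obtain ⟨C, hC, hxC⟩ := mem_sUnion.1 (hcov ▸ mem_univ x)
  have hxGUC : x ∈ closure (G ∩ U ∩ C) :=
    (hG.inter_isOpen hU).closure_subset hC (hU.closure_inter ⟨hx, hxU⟩)
  obtain ⟨B, hB, hBκ, hxB⟩ := exists_subset_inter_mk_le_tightness_of_mem_closure hxC hxGUC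
  exact ⟨B, hB.trans inter_subset_left, hBκ.trans (ht C hC), hxB⟩

end Saturated

variable {𝒞 : Set (Set X)} {μ : Cardinal.{u}}

theorem exists_mk_le_forall_subset_closure_inter (hμ : ℵ₀ ≤ μ) (h𝒞 : #𝒞 ≤ μ)
    (hcl : ∀ C ∈ 𝒞, clk μ C = Set.univ) (A : Set X) :
    ∃ A' : Set X, #A' ≤ #A * μ ∧ ∀ C ∈ 𝒞, A ⊆ closure (A' ∩ C) := by
  choose S hSC hSμ hxS using fun (p : A × 𝒞) =>
    mem_clk_iff.1 ((hcl p.2 p.2.2).symm ▸ mem_univ (p.1 : X))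
  refine ⟨⋃ p, S p, ?_, fun C hC x hx => ?_⟩
  · calc #(⋃ p, S p) ≤ #(A × 𝒞) * ⨆ p, #(S p) := mk_iUnion_le S
      _ ≤ #A * μ * μ := by
        rw [mk_prod, lift_id, lift_id]
        exact mul_le_mul' (mul_le_mul' le_rfl h𝒞) (ciSup_le' hSμ)
      _ = #A * μ := by rw [mul_assoc, mul_eq_self hμ]
  · exact closure_mono (subset_inter (subset_iUnion S (⟨x, hx⟩, ⟨C, hC⟩)) (hSC _))
      (hxS (⟨x, hx⟩, ⟨C, hC⟩))

theorem exists_saturated_superset (hμ : ℵ₀ ≤ μ) (h𝒞 : #𝒞 ≤ μ)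
    (hcl : ∀ C ∈ 𝒞, clk μ C = Set.univ) {A : Set X} (hA : #A ≤ μ) :
    ∃ G, A ⊆ G ∧ #G ≤ μ ∧ Saturated 𝒞 G := by
  choose f hfμ hf using exists_mk_le_forall_subset_closure_inter hμ h𝒞 hcl
  have hiter : ∀ n, #(f^[n] A) ≤ μ := by
    intro n
    induction n with
    | zero => exact hA
    | succ n ih =>
      rw [Function.iterate_succ_apply']
      exact (hfμ _).trans ((mul_le_mul' ih le_rfl).trans (mul_eq_self hμ).le)
  refine ⟨⋃ n, f^[n] A, subset_iUnion (fun n => f^[n] A) 0, ?_, fun C hC x hx => ?_⟩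
  · have := mk_iUnion_le_lift.{u, 0} fun n => f^[n] A
    simp only [mk_nat, lift_aleph0, lift_uzero] at this
    exact this.trans ((mul_le_mul' hμ (ciSup_le' hiter)).trans (mul_eq_self hμ).le)
  · obtain ⟨n, hn⟩ := mem_iUnion.1 hx
    refine closure_mono (inter_subset_inter_left C ?_) (hf _ C hC hn)
    rw [← Function.iterate_succ_apply' f n A]
    exact subset_iUnion (fun n => f^[n] A) (n + 1)

end Saturation

section Counting

variable {X : Type u} [TopologicalSpace X]

theorem exists_family_iInter_closure_eq_singleton {G : Set X} {κ : Cardinal.{u}} {x : X}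
    {𝒰 : Set (Set X)} (h𝒰 : ⋂ U ∈ 𝒰, closure U = {x})
    (hB : ∀ U ∈ 𝒰, ∃ B ⊆ G ∩ U, #B ≤ κ ∧ x ∈ closure B) :
    ∃ 𝓑 : Set (Set X), #𝓑 ≤ #𝒰 ∧ (∀ B ∈ 𝓑, B ⊆ G ∧ #B ≤ κ) ∧ ⋂ B ∈ 𝓑, closure B = {x} := by
  choose! B hBGU hBκ hxB using hB
  refine ⟨B '' 𝒰, mk_image_le, ?_, subset_antisymm ?_ ?_⟩
  · rintro _ ⟨U, hU, rfl⟩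
    exact ⟨(hBGU U hU).trans inter_subset_left, hBκ U hU⟩
  · rw [← h𝒰, biInter_image]
    exact iInter₂_mono fun U hU => closure_mono ((hBGU U hU).trans inter_subset_right)
  · rw [singleton_subset_iff, biInter_image]
    exact mem_iInter₂.2 hxB

theorem mk_le_of_forall_eq_iInter_closure {S G : Set X} {κ ν : Cardinal.{u}} (hν : ℵ₀ ≤ ν)
    (hG : #G ≤ ν) (hpow : ν ^ κ = ν)
    (h : ∀ x ∈ S, ∃ 𝓑 : Set (Set X), #𝓑 ≤ κ ∧ (∀ B ∈ 𝓑, B ⊆ G ∧ #B ≤ κ) ∧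
      ⋂ B ∈ 𝓑, closure B = {x}) : #S ≤ ν := by
  choose! 𝓑 h𝓑κ h𝓑G h𝓑x using h
  let ℬ : Set (Set X) := {B | B ⊆ G ∧ #B ≤ κ}
  have hℬ : #ℬ ≤ ν :=
    (mk_bounded_subset_le G κ).trans (hpow ▸ power_le_power_right (max_le hG hν))
  have hinj : Function.Injective fun x : S => (⟨𝓑 x, h𝓑G x x.2, h𝓑κ x x.2⟩ :
      {𝒮 : Set (Set X) // 𝒮 ⊆ ℬ ∧ #𝒮 ≤ κ}) := by
    intro x y hxy
    have h𝓑 : 𝓑 x = 𝓑 y := congrArg Subtype.val hxy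
    have hxy' : ({(x : X)} : Set X) = {(y : X)} := by rw [← h𝓑x x x.2, ← h𝓑x y y.2, h𝓑]
    exact Subtype.ext (singleton_eq_singleton_iff.1 hxy')
  exact (mk_le_of_injective hinj).trans
    ((mk_bounded_subset_le ℬ κ).trans (hpow ▸ power_le_power_right (max_le hℬ hν)))

end Counting

/-- Theorem 2.5. -/
theorem stmt1 {X : Type u} [TopologicalSpace X] [T2Space X] (D : Set X) :
    #(closure D) ≤ #D ^ (wt X * psic X) := by
  obtain ⟨hwt, 𝒞, h𝒞cov, h𝒞card, h𝒞⟩ := aleph0_le_wt_and_exists_isWtWitness X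
  obtain ⟨hpsic, h𝒰⟩ := aleph0_le_psic_and_forall_exists X
  set κ := wt X * psic X
  have hwtκ : wt X ≤ κ := le_mul_right (aleph0_pos.trans_le hpsic).ne'
  have hpsicκ : psic X ≤ κ := le_mul_left (aleph0_pos.trans_le hwt).ne'
  have hκ : ℵ₀ ≤ κ := hwt.trans hwtκ
  rcases le_or_gt #D 1 with hD | hD
  · rw [(mk_le_one_iff_set_subsingleton.1 hD).isClosed.closure_eq]
    exact self_le_power _ (one_le_aleph0.trans hκ)
  have h2κ : 2 ^ κ ≤ #D ^ κ := power_le_power_right (two_le_iff_one_lt.2 hD)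
  have hν : ℵ₀ ≤ #D ^ κ := (hκ.trans (cantor κ).le).trans h2κ
  have h2wt : 2 ^ wt X ≤ #D ^ κ := (power_le_power_left two_ne_zero hwtκ).trans h2κ
  obtain ⟨G, hDG, hG, hGsat⟩ := exists_saturated_superset hν (h𝒞card.trans h2wt)
    (fun C hC => univ_subset_iff.1 ((h𝒞 C hC).2 ▸ clk_mono h2wt C))
    (self_le_power _ (one_le_aleph0.trans hκ))
  refine (mk_le_mk_of_subset (closure_mono hDG)).trans
    (mk_le_of_forall_eq_iInter_closure hν hG (by rw [← power_mul, mul_eq_self hκ]) fun x hx => ?_)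
  obtain ⟨𝒰, h𝒰κ, h𝒰x, h𝒰eq⟩ := h𝒰 x
  obtain ⟨𝓑, h𝓑, h𝓑G, h𝓑x⟩ := exists_family_iInter_closure_eq_singleton h𝒰eq fun U hU =>
    hGsat.exists_subset_inter_mem_closure h𝒞cov (fun C hC => (h𝒞 C hC).1.trans hwtκ) hx
      (h𝒰x U hU).1 (h𝒰x U hU).2
  exact ⟨𝓑, h𝓑.trans (h𝒰κ.trans hpsicκ), h𝓑G, h𝓑x⟩
end

section
/- If X is a Hausdorff space, then |X| ≤ 2^{L(X)·wt(X)·ψ(X)}. -/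
open Cardinal Set TopologicalSpace

universe u

/-!
Let `κ = L(X)·wt(X)·ψ(X)`. In a Hausdorff space the Lindelöf property shrinks a pseudobase at `x`
to a closed pseudobase `V x` of size `≤ κ`; a point of `closure B` is then determined by the traces
on `B` of its closed pseudobase, so `|closure B| ≤ 2^κ` whenever `|B| ≤ κ`.
Fix a cover `𝒞` witnessing `wt(X) ≤ κ`. Closing off in `κ⁺` steps gives `H` with `|H| ≤ 2^κ` that is
`𝒞`-saturated and such that every family of `≤ κ` members of `V y`, `y ∈ cl_κ H`, covering `H` has
closures covering `X`. Saturation and `t(C) ≤ κ` give `closure H = cl_κ H`, of size `≤ 2^κ`; and a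
point `z ∉ closure H` would, by the Lindelöf property, yield such a family whose closures miss `z`.
-/

namespace Cardinal

lemma mk_iUnion_le_of_le {α ι : Type u} {f : ι → Set α} {c : Cardinal.{u}} (hc : ℵ₀ ≤ c)
    (hι : #ι ≤ c) (hf : ∀ i, #(f i) ≤ c) : #(⋃ i, f i) ≤ c :=
  (mk_iUnion_le f).trans <| (mul_le_mul' hι (ciSup_le' hf)).trans (mul_eq_self hc).le

lemma mk_bounded_subset_le_two_power {α : Type u} {s : Set α} {κ : Cardinal.{u}} (hκ : ℵ₀ ≤ κ)
    (hs : #s ≤ 2 ^ κ) : #{t : Set α // t ⊆ s ∧ #t ≤ κ} ≤ 2 ^ κ :=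
  calc #{t : Set α // t ⊆ s ∧ #t ≤ κ} ≤ max #s ℵ₀ ^ κ := mk_bounded_subset_le s κ
    _ ≤ (2 ^ κ) ^ κ := power_le_power_right (max_le hs (hκ.trans (cantor κ).le))
    _ = 2 ^ κ := by rw [← power_mul, mul_eq_self hκ]

end Cardinal

section CardinalFunctions

variable (X : Type u) [TopologicalSpace X]

lemma lindelofNumber_spec : ℵ₀ ≤ LindelofNumber X ∧ ∀ 𝒰 : Set (Set X), (∀ U ∈ 𝒰, IsOpen U) →
    ⋃₀ 𝒰 = Set.univ → ∃ 𝒱 ⊆ 𝒰, #𝒱 ≤ LindelofNumber X ∧ ⋃₀ 𝒱 = Set.univ :=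
  csInf_mem (s := {κ | ℵ₀ ≤ κ ∧ ∀ 𝒰 : Set (Set X), (∀ U ∈ 𝒰, IsOpen U) →
      ⋃₀ 𝒰 = Set.univ → ∃ 𝒱 ⊆ 𝒰, #𝒱 ≤ κ ∧ ⋃₀ 𝒱 = Set.univ})
    ⟨max ℵ₀ (2 ^ #X), le_max_left _ _, fun 𝒰 _ h𝒰 =>
      ⟨𝒰, subset_rfl, (mk_set_le 𝒰).trans (by rw [mk_set]; exact le_max_right _ _), h𝒰⟩⟩

lemma psi_spec [T1Space X] : ℵ₀ ≤ psi X ∧ ∀ x : X, ∃ 𝒰 : Set (Set X),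
    #𝒰 ≤ psi X ∧ (∀ U ∈ 𝒰, IsOpen U ∧ x ∈ U) ∧ ⋂₀ 𝒰 = {x} := by
  refine csInf_mem (s := {κ | ℵ₀ ≤ κ ∧ ∀ x : X, ∃ 𝒰 : Set (Set X),
      #𝒰 ≤ κ ∧ (∀ U ∈ 𝒰, IsOpen U ∧ x ∈ U) ∧ ⋂₀ 𝒰 = {x}})
    ⟨max ℵ₀ (2 ^ #X), le_max_left _ _, fun x => ⟨{U | IsOpen U ∧ x ∈ U},
      (mk_set_le _).trans (by rw [mk_set]; exact le_max_right _ _), fun _ hU => hU, ?_⟩⟩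
  refine Subset.antisymm (fun y hy => ?_) (singleton_subset_iff.2 fun _ hU => hU.2)
  by_contra hyx
  exact hy {y}ᶜ ⟨isOpen_compl_singleton, Ne.symm hyx⟩ rfl

lemma wt_spec : ℵ₀ ≤ wt X ∧ ∃ 𝒞 : Set (Set X), IsWtWitness (wt X) 𝒞 := by
  set κ := max ℵ₀ (tightness (Set.univ : Set X))
  have hκ : ℵ₀ ≤ κ := le_max_left _ _
  have h1 : (1 : Cardinal) ≤ 2 ^ κ := one_le_aleph0.trans (hκ.trans (cantor κ).le)
  refine csInf_mem (s := {κ | ℵ₀ ≤ κ ∧ ∃ 𝒞 : Set (Set X), IsWtWitness κ 𝒞})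
    ⟨κ, hκ, {Set.univ}, by simp, by simpa using h1, ?_⟩
  rintro C rfl
  refine ⟨le_max_right _ _, eq_univ_of_forall fun x => mem_iUnion₂.2 ⟨{x}, ?_, subset_closure rfl⟩⟩
  simpa using h1

lemma exists_subset_card_le_tightness {A : Set X} {x : X} (hx : x ∈ closure A) :
    ∃ B ⊆ A, #B ≤ tightness X ∧ x ∈ closure B :=
  (csInf_mem (s := {κ | ℵ₀ ≤ κ ∧ ∀ (A : Set X) (x : X), x ∈ closure A →
      ∃ B ⊆ A, #B ≤ κ ∧ x ∈ closure B})
    ⟨max ℵ₀ #X, le_max_left _ _, fun A _ hx =>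
      ⟨A, subset_rfl, (mk_set_le A).trans (le_max_right _ _), hx⟩⟩).2 A x hx

variable {X}

lemma exists_subcover_of_lindelofNumber_le {κ : Cardinal.{u}} (hL : LindelofNumber X ≤ κ)
    {𝒰 : Set (Set X)} (hU : ∀ U ∈ 𝒰, IsOpen U) (hcov : ⋃₀ 𝒰 = Set.univ) :
    ∃ 𝒱 ⊆ 𝒰, #𝒱 ≤ κ ∧ ⋃₀ 𝒱 = Set.univ :=
  let ⟨𝒱, h𝒱𝒰, h𝒱, h𝒱cov⟩ := (lindelofNumber_spec X).2 𝒰 hU hcov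
  ⟨𝒱, h𝒱𝒰, h𝒱.trans hL, h𝒱cov⟩

lemma clk_mono_left {κ κ' : Cardinal.{u}} (h : κ ≤ κ') (A : Set X) : clk κ A ⊆ clk κ' A :=
  iUnion₂_mono' fun B hB => ⟨B, ⟨hB.1, hB.2.trans h⟩, subset_rfl⟩

end CardinalFunctions

section ClosedPseudobase

variable {X : Type u} [TopologicalSpace X]

/-- Encodes `⋂ U ∈ 𝒰, closure U = {x}`, so that `𝒰` witnesses `ψ_c(x, X) ≤ #𝒰`. -/
def IsClosedPseudobase (x : X) (𝒰 : Set (Set X)) : Prop :=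
  (∀ U ∈ 𝒰, IsOpen U ∧ x ∈ U) ∧ ∀ y ≠ x, ∃ U ∈ 𝒰, y ∉ closure U

lemma exists_nhds_family_biInter_closure_subset [T2Space X] {κ : Cardinal.{u}}
    (hL : LindelofNumber X ≤ κ) {x : X} {U : Set X} (hU : IsOpen U) (hxU : x ∈ U) :
    ∃ 𝒲 : Set (Set X), #𝒲 ≤ κ ∧ (∀ W ∈ 𝒲, IsOpen W ∧ x ∈ W) ∧ ⋂ W ∈ 𝒲, closure W ⊆ U := by
  have hPQ : ∀ y, ∃ P Q : Set X, IsOpen P ∧ IsOpen Q ∧ y ∈ P ∧ x ∈ Q ∧ P ∩ closure Q ⊆ U := by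
    intro y
    by_cases hyU : y ∈ U
    · exact ⟨U, Set.univ, hU, isOpen_univ, hyU, mem_univ x, inter_subset_left⟩
    · obtain ⟨P, Q, hP, hQ, hyP, hxQ, hdisj⟩ := t2_separation (ne_of_mem_of_not_mem hxU hyU).symm
      exact ⟨P, Q, hP, hQ, hyP, hxQ, (hdisj.closure_right hP).inter_eq.trans_subset (empty_subset U)⟩
  choose P Q hP hQ hyP hxQ hPQ using hPQ
  obtain ⟨𝒱, h𝒱P, h𝒱, hcov⟩ := exists_subcover_of_lindelofNumber_le hL (𝒰 := range P)
    (forall_mem_range.2 hP) (eq_univ_of_forall fun y => mem_sUnion_of_mem (hyP y) (mem_range_self y))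
  obtain ⟨S, rfl, hPS⟩ := exists_image_eq_injOn_of_subset_range h𝒱P
  refine ⟨Q '' S, mk_image_le.trans ((mk_image_eq_of_injOn P S hPS).symm.trans_le h𝒱),
    forall_mem_image.2 fun y _ => ⟨hQ y, hxQ y⟩, fun z hz => ?_⟩
  obtain ⟨_, ⟨y, hyS, rfl⟩, hzP⟩ := mem_sUnion.1 (hcov.symm ▸ mem_univ z : z ∈ ⋃₀ (P '' S))
  exact hPQ y ⟨hzP, mem_iInter₂.1 hz _ (mem_image_of_mem Q hyS)⟩

lemma exists_isClosedPseudobase [T2Space X] (x : X) :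
    ∃ 𝒰 : Set (Set X), #𝒰 ≤ LindelofNumber X * psi X ∧ IsClosedPseudobase x 𝒰 := by
  obtain ⟨𝒰, h𝒰, hopen, hinter⟩ := (psi_spec X).2 x
  choose! 𝒲 h𝒲κ h𝒲open h𝒲sub using fun U (hU : U ∈ 𝒰) =>
    exists_nhds_family_biInter_closure_subset le_rfl (hopen U hU).1 (hopen U hU).2
  refine ⟨⋃ U ∈ 𝒰, 𝒲 U, ?_, fun W hW => ?_, fun y hyx => ?_⟩
  · calc #(⋃ U ∈ 𝒰, 𝒲 U) ≤ #𝒰 * ⨆ U : 𝒰, #(𝒲 U) := mk_biUnion_le _ _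
      _ ≤ psi X * LindelofNumber X := mul_le_mul' h𝒰 (ciSup_le' fun U => h𝒲κ U U.2)
      _ = LindelofNumber X * psi X := mul_comm _ _
  · obtain ⟨U, hU, hWU⟩ := mem_iUnion₂.1 hW
    exact h𝒲open U hU W hWU
  · obtain ⟨U, hU, hyU⟩ : ∃ U ∈ 𝒰, y ∉ U := by
      simpa using (by rwa [hinter] : y ∉ ⋂₀ 𝒰)
    obtain ⟨W, hW, hyW⟩ : ∃ W ∈ 𝒲 U, y ∉ closure W := by
      simpa using fun h => hyU (h𝒲sub U hU (mem_iInter₂.2 h))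
    exact ⟨W, mem_biUnion hU hW, hyW⟩

/-- The traces `B ∩ U` of a closed pseudobase at `x ∈ closure B` determine `x`. -/
lemma card_closure_le_two_power {κ : Cardinal.{u}} (hκ : ℵ₀ ≤ κ) {V : X → Set (Set X)}
    (hVκ : ∀ x, #(V x) ≤ κ) (hV : ∀ x, IsClosedPseudobase x (V x)) {B : Set X} (hB : #B ≤ κ) :
    #(closure B) ≤ 2 ^ κ := by
  let f : closure B → {t : Set (Set X) // t ⊆ 𝒫 B ∧ #t ≤ κ} := fun x =>
    ⟨(B ∩ ·) '' V x, image_subset_iff.2 fun _ _ => inter_subset_left, mk_image_le.trans (hVκ x)⟩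
  have hf : Function.Injective f := by
    rintro ⟨x, hx⟩ ⟨y, hy⟩ hxy
    by_contra hne
    obtain ⟨U, hU, hyU⟩ := (hV x).2 y fun h => hne (Subtype.ext h.symm)
    have htraces : (B ∩ ·) '' V x = (B ∩ ·) '' V y := congrArg Subtype.val hxy
    obtain ⟨W, hW, hWU⟩ : B ∩ U ∈ (B ∩ ·) '' V y := htraces ▸ mem_image_of_mem _ hU
    have hyBW : y ∈ closure (B ∩ W) := ((hV y).1 W hW).1.closure_inter ⟨hy, ((hV y).1 W hW).2⟩
    rw [show B ∩ W = B ∩ U from hWU] at hyBW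
    exact hyU (closure_mono inter_subset_right hyBW)
  refine (mk_le_of_injective hf).trans (mk_bounded_subset_le_two_power hκ ?_)
  rw [mk_powerset]
  exact power_le_power_left two_ne_zero hB

lemma card_clk_le_two_power {κ : Cardinal.{u}} (hκ : ℵ₀ ≤ κ) {V : X → Set (Set X)}
    (hVκ : ∀ x, #(V x) ≤ κ) (hV : ∀ x, IsClosedPseudobase x (V x)) {A : Set X}
    (hA : #A ≤ 2 ^ κ) : #(clk κ A) ≤ 2 ^ κ := by
  change #(⋃ B ∈ {B | B ⊆ A ∧ #B ≤ κ}, closure B) ≤ 2 ^ κ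
  rw [biUnion_eq_iUnion]
  exact mk_iUnion_le_of_le (hκ.trans (cantor κ).le) (mk_bounded_subset_le_two_power hκ hA)
    fun B => card_closure_le_two_power hκ hVκ hV B.2.2

end ClosedPseudobase

/-- Stage `i < κ⁺` collects the values of `G` at all `≤ κ`-subsets of the earlier stages; since
`κ⁺` is regular, a `≤ κ`-subset of the union lies below some stage. -/
lemma exists_closed_under_small_subsets {X : Type u} {κ : Cardinal.{u}} (hκ : ℵ₀ ≤ κ)
    (G : Set X → Set X) (hG : ∀ B : Set X, #B ≤ κ → #(G B) ≤ 2 ^ κ) :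
    ∃ H : Set X, #H ≤ 2 ^ κ ∧ ∀ B ⊆ H, #B ≤ κ → G B ⊆ H := by
  let ι := (Order.succ κ).ord.ToType
  obtain ⟨stage, hstage⟩ : ∃ stage : ι → Set X, ∀ i,
      stage i = ⋃ B ∈ {B | B ⊆ ⋃ j < i, stage j ∧ #B ≤ κ}, G B :=
    ⟨WellFoundedLT.fix fun i prev => ⋃ B ∈ {B | B ⊆ ⋃ (j) (hj : j < i), prev j hj ∧ #B ≤ κ}, G B,
      WellFoundedLT.fix_eq _⟩
  have h2κ : ℵ₀ ≤ 2 ^ κ := hκ.trans (cantor κ).le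
  have hι : #ι = Order.succ κ := by simp [ι]
  have hstage_card : ∀ i, #(stage i) ≤ 2 ^ κ := by
    intro i
    induction i using WellFoundedLT.induction with
    | _ i ih =>
      have hIio : #(Iio i) < Order.succ κ := by
        simpa [hι] using mk_Iio_lt i (by simp [ι])
      have hprev : #(⋃ j < i, stage j) ≤ 2 ^ κ := by
        change #(⋃ j ∈ Iio i, stage j) ≤ 2 ^ κ
        rw [biUnion_eq_iUnion]
        exact mk_iUnion_le_of_le h2κ ((Order.lt_succ_iff.1 hIio).trans (cantor κ).le)
          fun j => ih j j.2
      rw [hstage i, biUnion_eq_iUnion]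
      exact mk_iUnion_le_of_le h2κ (mk_bounded_subset_le_two_power hκ hprev)
        fun B => hG B B.2.2
  refine ⟨⋃ i, stage i, mk_iUnion_le_of_le h2κ (hι ▸ Order.succ_le_of_lt (cantor κ)) hstage_card,
    fun B hB hBκ => ?_⟩
  choose f hf using fun b : B => mem_iUnion.1 (hB b.2)
  obtain ⟨i, hi⟩ : ∃ i, ∀ b, f b < i := by
    have : ¬ IsCofinal (range f) := fun hcof => (Order.cof_le hcof).not_gt <| by
      rw [Ordinal.cof_toType, (Cardinal.isRegular_succ hκ).cof_ord]
      exact mk_range_le.trans_lt (hBκ.trans_lt (Order.lt_succ κ))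
    simpa [IsCofinal] using this
  refine subset_iUnion_of_subset i ?_
  rw [hstage i]
  exact subset_biUnion_of_mem (u := G)
    ⟨fun b hb => mem_iUnion₂.2 ⟨f ⟨b, hb⟩, hi _, hf ⟨b, hb⟩⟩, hBκ⟩

lemma exists_card_le_one_imp_eq_univ {α : Type u} (S : Set α) :
    ∃ E : Set α, #E ≤ 1 ∧ (E ⊆ S → S = Set.univ) := by
  by_cases hS : S = Set.univ
  · exact ⟨∅, by simp, fun _ => hS⟩
  · obtain ⟨z, hz⟩ := (ne_univ_iff_exists_notMem S).1 hS
    exact ⟨{z}, (mk_singleton z).le, fun h => absurd (h rfl) hz⟩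

section ClosingOff

variable {X : Type u} [TopologicalSpace X] {κ : Cardinal.{u}} {V : X → Set (Set X)}

def IsCoverReflecting (κ : Cardinal.{u}) (V : X → Set (Set X)) (H : Set X) : Prop :=
  ∀ B ⊆ H, #B ≤ κ → ∀ 𝒱 ⊆ ⋃ y ∈ closure B, V y, #𝒱 ≤ κ → H ⊆ ⋃₀ 𝒱 →
    ⋃ W ∈ 𝒱, closure W = Set.univ

lemma Saturated.closure_subset_clk {𝒞 : Set (Set X)} {H : Set X} (hH : Saturated 𝒞 H)
    (hcov : ⋃₀ 𝒞 = Set.univ) (ht : ∀ C ∈ 𝒞, tightness C ≤ κ) : closure H ⊆ clk κ H := by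
  intro y hy
  obtain ⟨C, hC, hyC⟩ := mem_sUnion.1 (hcov.symm ▸ mem_univ y : y ∈ ⋃₀ 𝒞)
  have hyHC : y ∈ closure (H ∩ C) := closure_minimal (hH C hC) isClosed_closure hy
  have hy' : (⟨y, hyC⟩ : C) ∈ closure (((↑) : C → X) ⁻¹' H) := by
    rwa [closure_subtype, Subtype.image_preimage_coe, inter_comm]
  obtain ⟨B, hBH, hB, hyB⟩ := exists_subset_card_le_tightness C hy'
  rw [closure_subtype] at hyB
  exact mem_iUnion₂.2 ⟨(↑) '' B, ⟨image_subset_iff.2 hBH, mk_image_le.trans (hB.trans (ht C hC))⟩,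
    hyB⟩

lemma exists_subcover_closure_notMem (hL : LindelofNumber X ≤ κ)
    (hV : ∀ x, IsClosedPseudobase x (V x)) {F : Set X} (hF : IsClosed F) {z : X} (hz : z ∉ F) :
    ∃ 𝒱 ⊆ ⋃ x ∈ F, V x, #𝒱 ≤ κ ∧ F ⊆ ⋃₀ 𝒱 ∧ z ∉ ⋃ W ∈ 𝒱, closure W := by
  choose W hWV hzW using fun x : F => (hV x).2 z fun h => hz (h ▸ x.2)
  have hWx : ∀ x : F, IsOpen (W x) ∧ x.1 ∈ W x := fun x => (hV x).1 _ (hWV x)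
  obtain ⟨𝒱, h𝒱, h𝒱κ, hcov⟩ := exists_subcover_of_lindelofNumber_le hL
    (𝒰 := insert Fᶜ (range W)) (by rintro _ (rfl | ⟨x, rfl⟩); exacts [hF.isOpen_compl, (hWx x).1])
    (eq_univ_of_forall fun y => by
      by_cases hy : y ∈ F
      exacts [⟨W ⟨y, hy⟩, Or.inr ⟨_, rfl⟩, (hWx ⟨y, hy⟩).2⟩, ⟨Fᶜ, Or.inl rfl, hy⟩])
  refine ⟨𝒱 ∩ range W, ?_, (mk_le_mk_of_subset inter_subset_left).trans h𝒱κ, fun y hy => ?_, ?_⟩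
  · rintro _ ⟨-, x, rfl⟩
    exact mem_biUnion x.2 (hWV x)
  · obtain ⟨U, hU, hyU⟩ := mem_sUnion.1 (hcov.symm ▸ mem_univ y : y ∈ ⋃₀ 𝒱)
    rcases h𝒱 hU with rfl | hUW
    exacts [absurd hy hyU, ⟨U, ⟨hU, hUW⟩, hyU⟩]
  · simp only [mem_iUnion₂, not_exists]
    rintro _ ⟨-, x, rfl⟩
    exact hzW x

lemma IsCoverReflecting.closure_eq_univ {H : Set X} (hH : IsCoverReflecting κ V H) (hκ : ℵ₀ ≤ κ)
    (hL : LindelofNumber X ≤ κ) (hV : ∀ x, IsClosedPseudobase x (V x))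
    (hHcl : closure H ⊆ clk κ H) : closure H = Set.univ := by
  by_contra hne
  obtain ⟨z, hz⟩ := (ne_univ_iff_exists_notMem _).1 hne
  obtain ⟨𝒱, h𝒱V, h𝒱κ, hcov, hz𝒱⟩ := exists_subcover_closure_notMem hL hV isClosed_closure hz
  have hsmall : ∀ W : 𝒱, ∃ B ⊆ H, #B ≤ κ ∧ W.1 ∈ ⋃ y ∈ closure B, V y := by
    rintro ⟨W, hW⟩
    obtain ⟨x, hx, hWx⟩ := mem_iUnion₂.1 (h𝒱V hW)
    obtain ⟨B, ⟨hBH, hBκ⟩, hxB⟩ := mem_iUnion₂.1 (hHcl hx)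
    exact ⟨B, hBH, hBκ, mem_biUnion hxB hWx⟩
  choose B hBH hBκ hWB using hsmall
  have hcl := hH (⋃ W, B W) (iUnion_subset hBH) (mk_iUnion_le_of_le hκ h𝒱κ hBκ) 𝒱
    (fun W hW => biUnion_mono (closure_mono (subset_iUnion B ⟨W, hW⟩)) (fun _ _ => subset_rfl)
      (hWB ⟨W, hW⟩)) h𝒱κ (subset_closure.trans hcov)
  exact hz𝒱 (hcl.symm ▸ mem_univ z)

lemma exists_saturated_isCoverReflecting (hκ : ℵ₀ ≤ κ) (hVκ : ∀ x, #(V x) ≤ κ)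
    (hV : ∀ x, IsClosedPseudobase x (V x)) {𝒞 : Set (Set X)} (h𝒞 : #𝒞 ≤ 2 ^ κ)
    (h𝒞cl : ∀ C ∈ 𝒞, clk (2 ^ κ) C = Set.univ) :
    ∃ H : Set X, #H ≤ 2 ^ κ ∧ Saturated 𝒞 H ∧ IsCoverReflecting κ V H := by
  have h2κ : ℵ₀ ≤ 2 ^ κ := hκ.trans (cantor κ).le
  have hb : ∀ C ∈ 𝒞, ∀ x, ∃ b ⊆ C, #b ≤ 2 ^ κ ∧ x ∈ closure b := fun C hC x => by
    obtain ⟨b, hb, hxb⟩ := mem_iUnion₂.1 (h𝒞cl C hC ▸ mem_univ x : x ∈ clk _ C)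
    exact ⟨b, hb.1, hb.2, hxb⟩
  choose! b hbC hbκ hxb using hb
  choose E hEκ hE using exists_card_le_one_imp_eq_univ (α := X)
  obtain ⟨H, hHκ, hH⟩ := exists_closed_under_small_subsets hκ
    (fun B => (⋃ C ∈ 𝒞, ⋃ x ∈ B, b C x) ∪
      ⋃ 𝒱 ∈ {𝒱 | 𝒱 ⊆ ⋃ y ∈ closure B, V y ∧ #𝒱 ≤ κ}, E (⋃ W ∈ 𝒱, closure W))
    fun B hB => by
      refine (mk_union_le _ _).trans ((add_le_add ?_ ?_).trans (add_eq_self h2κ).le)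
      · rw [biUnion_eq_iUnion]
        refine mk_iUnion_le_of_le h2κ h𝒞 fun C => ?_
        rw [biUnion_eq_iUnion]
        exact mk_iUnion_le_of_le h2κ (hB.trans (cantor κ).le) fun x => hbκ C C.2 x
      · rw [biUnion_eq_iUnion]
        refine mk_iUnion_le_of_le h2κ (mk_bounded_subset_le_two_power hκ ?_)
          fun _ => (hEκ _).trans (one_le_aleph0.trans h2κ)
        rw [biUnion_eq_iUnion]
        exact mk_iUnion_le_of_le h2κ (card_closure_le_two_power hκ hVκ hV hB)
          fun y => (hVκ y).trans (cantor κ).le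
  refine ⟨H, hHκ, fun C hC x hx => ?_, fun B hBH hBκ 𝒱 h𝒱V h𝒱κ hH𝒱 => ?_⟩
  · have hbH : b C x ⊆ H := fun z hz => hH {x} (singleton_subset_iff.2 hx)
      ((mk_singleton x).le.trans (one_le_aleph0.trans hκ))
      (Or.inl (mem_biUnion hC (mem_biUnion (mem_singleton x) hz)))
    exact closure_mono (subset_inter hbH (hbC C hC x)) (hxb C hC x)
  · have hEH : E (⋃ W ∈ 𝒱, closure W) ⊆ H := fun z hz =>
      hH B hBH hBκ (Or.inr (mem_biUnion (by exact ⟨h𝒱V, h𝒱κ⟩) hz))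
    exact hE _ (hEH.trans (hH𝒱.trans fun y ⟨W, hW, hyW⟩ => mem_biUnion hW (subset_closure hyW)))

end ClosingOff

/-- Theorem 2.8. -/
theorem stmt3 {X : Type u} [TopologicalSpace X] [T2Space X] :
    #X ≤ 2 ^ (LindelofNumber X * wt X * psi X) := by
  set κ := LindelofNumber X * wt X * psi X
  obtain ⟨hL, -⟩ := lindelofNumber_spec X
  obtain ⟨hwt, 𝒞, hcov, h𝒞, h𝒞C⟩ := wt_spec X
  have hψ := (psi_spec X).1
  have hLκ : LindelofNumber X ≤ κ := (le_mul_right (aleph0_pos.trans_le hwt).ne').trans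
    (le_mul_right (aleph0_pos.trans_le hψ).ne')
  have hwtκ : wt X ≤ κ := (le_mul_left (aleph0_pos.trans_le hL).ne').trans
    (le_mul_right (aleph0_pos.trans_le hψ).ne')
  have hLψκ : LindelofNumber X * psi X ≤ κ :=
    mul_le_mul' (le_mul_right (aleph0_pos.trans_le hwt).ne') le_rfl
  have hκ : ℵ₀ ≤ κ := hL.trans hLκ
  have h2 : (2 : Cardinal) ^ wt X ≤ 2 ^ κ := power_le_power_left two_ne_zero hwtκ
  choose V hVκ hV using fun x : X => exists_isClosedPseudobase x
  obtain ⟨H, hHκ, hsat, hrefl⟩ := exists_saturated_isCoverReflecting hκ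
    (fun x => (hVκ x).trans hLψκ) hV (h𝒞.trans h2)
    fun C hC => eq_univ_of_univ_subset ((h𝒞C C hC).2 ▸ clk_mono_left h2 C)
  have hHcl := hsat.closure_subset_clk hcov fun C hC => (h𝒞C C hC).1.trans hwtκ
  rw [← mk_univ, ← hrefl.closure_eq_univ hκ hLκ hV hHcl]
  exact (mk_le_mk_of_subset hHcl).trans
    (card_clk_le_two_power hκ (fun x => (hVκ x).trans hLψκ) hV hHκ)
end

section
/- Let X be a space, κ an infinite cardinal, and 𝒞 a cover of X with |𝒞| ≤ 2^κ such that each C ∈ 𝒞 has tightness t(C) ≤ κ and each C ∈ 𝒞 is dense in X. If t(X) ≤ 2^κ, then wt(X) ≤ κ. -/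
open Cardinal Set TopologicalSpace

universe u

/-- Lemma 2.10, case (a). -/
theorem stmt5 {X : Type u} [TopologicalSpace X] (κ : Cardinal.{u}) (hκ : ℵ₀ ≤ κ)
    (𝒞 : Set (Set X)) (hcov : ⋃₀ 𝒞 = Set.univ) (hcard : #𝒞 ≤ 2 ^ κ)
    (ht : ∀ C ∈ 𝒞, tightness ↥C ≤ κ) (hd : ∀ C ∈ 𝒞, Dense C)
    (htX : tightness X ≤ 2 ^ κ) :
    wt X ≤ κ := by
  have hne : {μ : Cardinal.{u} | ℵ₀ ≤ μ ∧ ∀ (A : Set X) (x : X), x ∈ closure A →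
      ∃ B ⊆ A, #B ≤ μ ∧ x ∈ closure B}.Nonempty := by
    refine ⟨#X ⊔ ℵ₀, le_sup_right, fun A x hx => ⟨A, subset_rfl, ?_, hx⟩⟩
    exact le_sup_of_le_left ((mk_le_mk_of_subset (subset_univ A)).trans_eq mk_univ)
  have hmem := csInf_mem hne
  have htX' : tightness X ∈ _ := hmem
  apply csInf_le'
  refine ⟨hκ, 𝒞, hcov, hcard, fun C hC => ⟨ht C hC, ?_⟩⟩
  rw [eq_univ_iff_forall]
  intro x
  have hxC : x ∈ closure C := by rw [(hd C hC).closure_eq]; trivial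
  obtain ⟨B, hBC, hBcard, hxB⟩ := htX'.2 C x hxC
  exact mem_iUnion₂.2 ⟨B, ⟨hBC, hBcard.trans htX⟩, hxB⟩
end

section
/- Let X be a space, κ an infinite cardinal, and 𝒞 a cover of X with |𝒞| ≤ 2^κ such that each C ∈ 𝒞 has tightness t(C) ≤ κ and each C ∈ 𝒞 is dense in X. If πχ(X) ≤ 2^κ, then wt(X) ≤ κ. -/
open Cardinal Set TopologicalSpace

universe u

/-- Lemma 2.10, case (b). -/
theorem stmt6 {X : Type u} [TopologicalSpace X] (κ : Cardinal.{u}) (hκ : ℵ₀ ≤ κ)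
    (𝒞 : Set (Set X)) (hcov : ⋃₀ 𝒞 = Set.univ) (hcard : #𝒞 ≤ 2 ^ κ)
    (ht : ∀ C ∈ 𝒞, tightness ↥C ≤ κ) (hd : ∀ C ∈ 𝒞, Dense C)
    (hpi : piChar X ≤ 2 ^ κ) :
    wt X ≤ κ := by
  have hκset : κ ∈ {κ' : Cardinal.{u} | ℵ₀ ≤ κ' ∧ ∃ 𝒞 : Set (Set X), IsWtWitness κ' 𝒞} := by
    refine ⟨hκ, 𝒞, hcov, hcard, fun C hC => ⟨ht C hC, ?_⟩⟩
    ext x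
    simp only [Set.mem_univ, iff_true, clk, Set.mem_iUnion]
    have hne : {μ : Cardinal.{u} | ∃ ℬ : Set (Set X), #ℬ ≤ μ ∧
        (∀ B ∈ ℬ, IsOpen B ∧ B.Nonempty) ∧
        ∀ U : Set X, IsOpen U → x ∈ U → ∃ B ∈ ℬ, B ⊆ U}.Nonempty :=
      ⟨#(Set X), {B | IsOpen B ∧ B.Nonempty}, Cardinal.mk_set_le _, fun B hB => hB,
        fun U hU hxU => ⟨U, ⟨hU, ⟨x, hxU⟩⟩, subset_rfl⟩⟩
    obtain ⟨ℬ, hℬcard, hℬopen, hℬbase⟩ := csInf_mem hne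
    have hpt : piCharPt x ≤ 2 ^ κ :=
      le_trans (le_ciSup (Cardinal.bddAbove_range _) x) hpi
    have hchoice : ∀ B : ↥ℬ, ((B : Set X) ∩ C).Nonempty := fun B =>
      (hd C hC).inter_open_nonempty _ (hℬopen B B.2).1 (hℬopen B B.2).2
    choose f hf using hchoice
    refine ⟨Set.range f, ⟨?_, ?_⟩, ?_⟩
    · rintro _ ⟨B, rfl⟩; exact (hf B).2
    · exact le_trans Cardinal.mk_range_le (le_trans hℬcard hpt)
    · rw [mem_closure_iff]
      intro U hU hxU
      obtain ⟨B, hBℬ, hBU⟩ := hℬbase U hU hxU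
      exact ⟨f ⟨B, hBℬ⟩, hBU (hf ⟨B, hBℬ⟩).1, ⟨⟨B, hBℬ⟩, rfl⟩⟩
  exact csInf_le (OrderBot.bddBelow _) hκset
end

section
/- Let Y = 2^𝔠 be the Cantor cube with product topology, and for i ∈ {0,1} let C_i = {x ∈ Y : |{α < 𝔠 : x(α) = i}| < ω}. Then X = C_0 ∪ C_1, as a subspace of Y, satisfies: each C_i is dense in X, each C_i is countably tight, and wt(X) = ω while t(X) = 𝔠. -/
open Cardinal Set TopologicalSpace

universe u

/-- The Cantor cube `2^𝔠`, realized as functions from an index set of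
cardinality `𝔠` to the discrete two-point space. -/
abbrev CantorCube : Type := (ℕ → Bool) → Bool

/-- `C i = {x : |{α : x(α) = i}| < ω}` for `i ∈ {0, 1}`. -/
def Cpart (i : Bool) : Set CantorCube := {x | {α : ℕ → Bool | x α = i}.Finite}

open Topology


lemma bool_eq_of_ne {b c i : Bool} (h1 : b ≠ i) (h2 : c ≠ i) : b = c := by
  cases b <;> cases c <;> cases i <;> simp_all

lemma mem_closure_cc {A : Set CantorCube} {x : CantorCube} :
    x ∈ closure A ↔ ∀ T : Finset (ℕ → Bool), ∃ a ∈ A, ∀ α ∈ T, a α = x α := by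
  constructor
  · intro h T
    have hU : IsOpen {y : CantorCube | ∀ α ∈ T, y α = x α} := by
      have he : {y : CantorCube | ∀ α ∈ T, y α = x α}
          = ⋂ α ∈ T, (fun y : CantorCube => y α) ⁻¹' {x α} := by
        ext y; simp
      rw [he]
      exact isOpen_biInter_finset fun α _ =>
        (continuous_apply α).isOpen_preimage _ (isOpen_discrete _)
    rcases mem_closure_iff.mp h _ hU (fun α _ => rfl) with ⟨a, ha, haA⟩
    exact ⟨a, haA, ha⟩
  · intro h
    rw [mem_closure_iff_nhds]
    intro U hU
    rw [nhds_pi] at hU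
    rcases Filter.mem_pi.mp hU with ⟨I, hIfin, t, ht, hsub⟩
    rcases h hIfin.toFinset with ⟨a, haA, hag⟩
    refine ⟨a, hsub fun α hα => ?_, haA⟩
    rw [hag α (hIfin.mem_toFinset.mpr hα)]
    exact mem_of_mem_nhds (ht α)

lemma dense_cpart (i : Bool) : Dense (Cpart i) := by
  classical
  intro x
  rw [mem_closure_cc]
  intro T
  refine ⟨fun α => if α ∈ T then x α else !i, ?_, fun α hα => if_pos hα⟩
  apply Set.Finite.subset T.finite_toSet
  intro α hα
  simp only [mem_setOf_eq] at hα
  by_contra h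
  rw [if_neg (by simpa using h)] at hα
  simp at hα

lemma countable_finset_subsets {s : Set (ℕ → Bool)} (hs : s.Countable) :
    {T : Finset (ℕ → Bool) | ↑T ⊆ s}.Countable := by
  have he : {T : Finset (ℕ → Bool) | ↑T ⊆ s}
      = (fun T : Finset (ℕ → Bool) => (↑T : Set (ℕ → Bool))) ⁻¹' {t | t.Finite ∧ t ⊆ s} := by
    ext T; simp [T.finite_toSet]
  rw [he]
  exact (countable_setOf_finite_subset hs).preimage Finset.coe_injective

lemma core_lemma (i : Bool) (A : Set CantorCube) (hA : A ⊆ Cpart i) (x : CantorCube)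
    (hx : x ∈ Cpart i) (hc : x ∈ closure A) :
    ∃ B ⊆ A, B.Countable ∧ x ∈ closure B := by
  classical
  rw [mem_closure_cc] at hc
  choose a haA hax using hc
  let S : ℕ → Set (ℕ → Bool) := fun n => Nat.rec {α | x α = i}
    (fun _ Sn => Sn ∪ ⋃ (T : Finset (ℕ → Bool)) (_ : ↑T ⊆ Sn), {α | a T α = i}) n
  have hS0 : S 0 = {α | x α = i} := rfl
  have hSsucc : ∀ n, S (n + 1)
      = S n ∪ ⋃ (T : Finset (ℕ → Bool)) (_ : ↑T ⊆ S n), {α | a T α = i} := fun n => rfl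
  have hmono : Monotone S := monotone_nat_of_le_succ fun n => by
    rw [hSsucc]; exact subset_union_left
  have hScount : ∀ n, (S n).Countable := by
    intro n; induction n with
    | zero => exact hx.countable
    | succ n ih =>
      rw [hSsucc]
      refine ih.union ?_
      have : (⋃ T ∈ {T : Finset (ℕ → Bool) | ↑T ⊆ S n}, {α | a T α = i}).Countable :=
        Set.Countable.biUnion (countable_finset_subsets ih)
          (fun T _ => (hA (haA T)).countable)
      simpa using this
  set Sig : Set (ℕ → Bool) := ⋃ n, S n with hSig
  have hSigc : Sig.Countable := countable_iUnion hScount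
  refine ⟨a '' {T | ↑T ⊆ Sig}, ?_, ?_, ?_⟩
  · rintro _ ⟨T, _, rfl⟩; exact haA T
  · exact (countable_finset_subsets hSigc).image a
  · rw [mem_closure_cc]
    intro T
    have hfin : ((↑T : Set (ℕ → Bool)) ∩ Sig).Finite := T.finite_toSet.inter_of_left _
    set T' := hfin.toFinset with hT'
    have hT'sub : (↑T' : Set (ℕ → Bool)) ⊆ Sig := by
      rw [hT', Set.Finite.coe_toFinset]; exact inter_subset_right
    have hexn : ∃ n, (↑T' : Set (ℕ → Bool)) ⊆ S n := by
      have hall : ∀ α ∈ T', ∃ n, α ∈ S n := fun α h => mem_iUnion.mp (hT'sub h)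
      choose f hf using hall
      refine ⟨T'.sup fun α => if h : α ∈ T' then f α h else 0, fun α hα => ?_⟩
      have hα' : α ∈ T' := hα
      refine hmono ?_ (hf α hα')
      have := Finset.le_sup (f := fun α => if h : α ∈ T' then f α h else 0) hα'
      simpa [dif_pos hα'] using this
    obtain ⟨n, hn⟩ := hexn
    refine ⟨a T', ⟨T', hT'sub, rfl⟩, fun α hα => ?_⟩
    by_cases hαS : α ∈ Sig
    · exact hax T' α (by rw [hT', Set.Finite.mem_toFinset]; exact ⟨hα, hαS⟩)
    · have h1 : x α ≠ i := fun h => hαS (mem_iUnion.mpr ⟨0, h⟩)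
      have h2 : a T' α ≠ i := fun h => by
        refine hαS (mem_iUnion.mpr ⟨n + 1, ?_⟩)
        rw [hSsucc]
        exact Or.inr (mem_iUnion.mpr ⟨T', mem_iUnion.mpr ⟨hn, h⟩⟩)
      exact bool_eq_of_ne h2 h1


lemma ctight_prop {Z : Type} [TopologicalSpace Z] {f : Z → CantorCube}
    (hf : IsInducing f) (hinj : Function.Injective f) {i : Bool}
    (hr : ∀ z, f z ∈ Cpart i) (A : Set Z) (z : Z) (hz : z ∈ closure A) :
    ∃ B ⊆ A, #B ≤ ℵ₀ ∧ z ∈ closure B := by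
  rw [hf.closure_eq_preimage_closure_image] at hz
  obtain ⟨B₀, hB₀A, hB₀c, hB₀cl⟩ := core_lemma i (f '' A)
    (by rintro _ ⟨w, _, rfl⟩; exact hr w) (f z) (hr z) hz
  refine ⟨A ∩ f ⁻¹' B₀, inter_subset_left, ?_, ?_⟩
  · exact ((hB₀c.preimage hinj).mono inter_subset_right).le_aleph0
  · rw [hf.closure_eq_preimage_closure_image, mem_preimage,
      Set.image_inter_preimage, Set.inter_eq_right.mpr hB₀A]
    exact hB₀cl

lemma tightness_eq_aleph0 {Z : Type} [TopologicalSpace Z] {f : Z → CantorCube}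
    (hf : IsInducing f) (hinj : Function.Injective f) {i : Bool}
    (hr : ∀ z, f z ∈ Cpart i) : tightness Z = ℵ₀ := by
  have hmem : ℵ₀ ∈ {κ : Cardinal | ℵ₀ ≤ κ ∧ ∀ (A : Set Z) (x : Z), x ∈ closure A →
      ∃ B ⊆ A, #B ≤ κ ∧ x ∈ closure B} :=
    ⟨le_rfl, fun A z hz => ctight_prop hf hinj hr A z hz⟩
  exact le_antisymm (csInf_le' hmem) (le_csInf ⟨_, hmem⟩ fun κ hκ => hκ.1)

lemma mk_le_continuum_aux {Z : Type} {f : Z → CantorCube} (hinj : Function.Injective f)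
    {i : Bool} (hr : ∀ z, f z ∈ Cpart i) : #Z ≤ 𝔠 := by
  have hfin : ∀ z : Z, ({α | f z α = i}).Finite := fun z => hr z
  have h : Function.Injective (fun z : Z => (hfin z).toFinset) := by
    intro z w h
    apply hinj; funext α
    simp only at h
    by_cases hα : f z α = i
    · have h1 : α ∈ (hfin z).toFinset := (hfin z).mem_toFinset.mpr hα
      rw [h] at h1
      rw [hα, (hfin w).mem_toFinset.mp h1]
    · have hw : f w α ≠ i := fun hc => by
        have h1 : α ∈ (hfin w).toFinset := (hfin w).mem_toFinset.mpr hc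
        rw [← h] at h1
        exact hα ((hfin z).mem_toFinset.mp h1)
      exact bool_eq_of_ne hα hw
  calc #Z ≤ #(Finset (ℕ → Bool)) := Cardinal.mk_le_of_injective h
    _ = #(ℕ → Bool) := Cardinal.mk_finset_of_infinite _
    _ = 𝔠 := by rw [← Cardinal.two_power_aleph0, Cardinal.mk_arrow]; simp


/-- Example 2.11: `X = C₀ ∪ C₁ ⊆ 2^𝔠` has each `C i` dense in `X` and
countably tight, with `wt(X) = ω` but `t(X) = 𝔠`. -/
theorem stmt7 :
    (∀ i : Bool, Dense {z : ↥(Cpart false ∪ Cpart true) | (z : CantorCube) ∈ Cpart i}) ∧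
    (∀ i : Bool, tightness ↥(Cpart i) = ℵ₀) ∧
    wt ↥(Cpart false ∪ Cpart true) = ℵ₀ ∧
    tightness ↥(Cpart false ∪ Cpart true) = Cardinal.continuum := by
  classical
  have hsub : ∀ i : Bool, Cpart i ⊆ Cpart false ∪ Cpart true := by
    intro i; cases i
    · exact subset_union_left
    · exact subset_union_right
  have hdense : ∀ i : Bool,
      Dense {z : ↥(Cpart false ∪ Cpart true) | (z : CantorCube) ∈ Cpart i} := by
    intro i z
    rw [closure_subtype]
    have himg : Subtype.val ''
        {z : ↥(Cpart false ∪ Cpart true) | (z : CantorCube) ∈ Cpart i} = Cpart i := by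
      ext y
      constructor
      · rintro ⟨w, hw, rfl⟩; exact hw
      · intro hy; exact ⟨⟨y, hsub i hy⟩, hy, rfl⟩
    rw [himg]
    exact dense_cpart i _
  have htCi : ∀ i : Bool, tightness ↥(Cpart i) = ℵ₀ := fun i =>
    tightness_eq_aleph0 IsInducing.subtypeVal Subtype.val_injective (fun z => z.2)
  have htD : ∀ i : Bool,
      tightness ↥{z : ↥(Cpart false ∪ Cpart true) | (z : CantorCube) ∈ Cpart i} = ℵ₀ := by
    intro i
    exact tightness_eq_aleph0 (f := Subtype.val ∘ Subtype.val)
      (IsInducing.subtypeVal.comp IsInducing.subtypeVal)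
      (Subtype.val_injective.comp Subtype.val_injective) (fun z => z.2)
  have hmkD : ∀ i : Bool,
      #(↥{z : ↥(Cpart false ∪ Cpart true) | (z : CantorCube) ∈ Cpart i}) ≤ 𝔠 := fun i =>
    mk_le_continuum_aux (f := Subtype.val ∘ Subtype.val)
      (Subtype.val_injective.comp Subtype.val_injective) (fun z => z.2)
  have hXcard : #(↥(Cpart false ∪ Cpart true)) ≤ 𝔠 := by
    refine le_trans (Cardinal.mk_union_le _ _) ?_
    have h1 : #(↥(Cpart false)) ≤ 𝔠 :=
      mk_le_continuum_aux Subtype.val_injective (fun z => z.2)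
    have h2 : #(↥(Cpart true)) ≤ 𝔠 :=
      mk_le_continuum_aux Subtype.val_injective (fun z => z.2)
    calc #(↥(Cpart false)) + #(↥(Cpart true)) ≤ 𝔠 + 𝔠 := add_le_add h1 h2
      _ = 𝔠 := Cardinal.add_eq_self Cardinal.aleph0_le_continuum
  have htwo : (2 : Cardinal) ≤ 2 ^ (ℵ₀ : Cardinal) := by
    rw [Cardinal.two_power_aleph0]
    exact le_trans (le_of_lt (by exact_mod_cast Cardinal.nat_lt_aleph0 2))
      Cardinal.aleph0_le_continuum
  have hwt : wt ↥(Cpart false ∪ Cpart true) = ℵ₀ := by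
    have hmem : ℵ₀ ∈ {κ : Cardinal | ℵ₀ ≤ κ ∧
        ∃ 𝒞 : Set (Set ↥(Cpart false ∪ Cpart true)), IsWtWitness κ 𝒞} := by
      refine ⟨le_rfl, {{z : ↥(Cpart false ∪ Cpart true) | (z : CantorCube) ∈ Cpart false}, {z : ↥(Cpart false ∪ Cpart true) | (z : CantorCube) ∈ Cpart true}},
        ?_, ?_, ?_⟩
      · ext z
        simp only [mem_sUnion, mem_univ, iff_true]
        rcases z.2 with h | h
        · exact ⟨_, Or.inl rfl, h⟩
        · exact ⟨_, Or.inr rfl, h⟩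
      · refine le_trans (Cardinal.mk_insert_le ..) ?_
        rw [Cardinal.mk_singleton]
        exact le_trans (by norm_num) htwo
      · rintro C hC
        rcases hC with rfl | rfl
        · refine ⟨(htD false).le, ?_⟩
          apply Set.eq_univ_of_forall
          intro z
          refine mem_iUnion.mpr ⟨{z : ↥(Cpart false ∪ Cpart true) | (z : CantorCube) ∈ Cpart false},
            mem_iUnion.mpr ⟨⟨subset_rfl, ?_⟩, hdense false z⟩⟩
          rw [Cardinal.two_power_aleph0]
          exact hmkD false
        · refine ⟨(htD true).le, ?_⟩
          apply Set.eq_univ_of_forall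
          intro z
          refine mem_iUnion.mpr ⟨{z : ↥(Cpart false ∪ Cpart true) | (z : CantorCube) ∈ Cpart true},
            mem_iUnion.mpr ⟨⟨subset_rfl, ?_⟩, hdense true z⟩⟩
          rw [Cardinal.two_power_aleph0]
          exact hmkD true
    exact le_antisymm (csInf_le' hmem) (le_csInf ⟨_, hmem⟩ fun κ hκ => hκ.1)
  have ht : tightness ↥(Cpart false ∪ Cpart true) = 𝔠 := by
    have hmem : 𝔠 ∈ {κ : Cardinal | ℵ₀ ≤ κ ∧
        ∀ (A : Set ↥(Cpart false ∪ Cpart true)) (x : ↥(Cpart false ∪ Cpart true)),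
          x ∈ closure A → ∃ B ⊆ A, #B ≤ κ ∧ x ∈ closure B} :=
      ⟨Cardinal.aleph0_le_continuum, fun A z hz =>
        ⟨A, subset_rfl, le_trans (Cardinal.mk_set_le A) hXcard, hz⟩⟩
    refine le_antisymm (csInf_le' hmem) (le_csInf ⟨_, hmem⟩ ?_)
    rintro κ ⟨hκ0, hκ⟩
    by_contra hlt
    push_neg at hlt
    have hz0mem : (fun _ => false : CantorCube) ∈ Cpart false ∪ Cpart true := by
      right
      exact Set.Finite.subset Set.finite_empty (by intro α h; simp at h)
    set z₀ : ↥(Cpart false ∪ Cpart true) := ⟨fun _ => false, hz0mem⟩ with hz₀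
    obtain ⟨B, hBA, hBκ, hBcl⟩ :=
      hκ {z : ↥(Cpart false ∪ Cpart true) | (z : CantorCube) ∈ Cpart false} z₀ (hdense false z₀)
    set U : Set (ℕ → Bool) :=
      ⋃ b : ↥B, {α | ((b : ↥(Cpart false ∪ Cpart true)) : CantorCube) α = false} with hU
    have hUlt : #↥U < 𝔠 := by
      rcases isEmpty_or_nonempty ↥B with he | hne
      · have he2 : U = ∅ := by rw [hU]; exact iUnion_of_empty _
        rw [he2]
        simpa using Cardinal.continuum_pos
      · calc #↥U ≤ #↥B * ⨆ b : ↥B,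
              #↥{α | ((b : ↥(Cpart false ∪ Cpart true)) : CantorCube) α = false} :=
            Cardinal.mk_iUnion_le _
          _ ≤ κ * ℵ₀ := mul_le_mul' hBκ
              (ciSup_le' fun b => ((hBA b.2 : Set.Finite _).countable).le_aleph0)
          _ = κ := by rw [Cardinal.mul_eq_max hκ0 le_rfl, max_eq_left hκ0]
          _ < 𝔠 := hlt
    have hex : ∃ α₀, α₀ ∉ U := by
      by_contra h
      push_neg at h
      have he : U = Set.univ := Set.eq_univ_of_forall h
      rw [he, Cardinal.mk_univ] at hUlt
      have hc : #(ℕ → Bool) = 𝔠 := by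
        rw [← Cardinal.two_power_aleph0, Cardinal.mk_arrow]; simp
      rw [hc] at hUlt
      exact lt_irrefl _ hUlt
    obtain ⟨α₀, hα₀⟩ := hex
    have hopen : IsOpen {z : ↥(Cpart false ∪ Cpart true) | (z : CantorCube) α₀ = false} := by
      have he : {z : ↥(Cpart false ∪ Cpart true) | (z : CantorCube) α₀ = false}
          = (fun z : ↥(Cpart false ∪ Cpart true) => (z : CantorCube) α₀) ⁻¹' {false} := rfl
      rw [he]
      exact ((continuous_apply α₀).comp continuous_subtype_val).isOpen_preimage _
        (isOpen_discrete _)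
    obtain ⟨b, hbV, hbB⟩ := mem_closure_iff.mp hBcl _ hopen rfl
    exact hα₀ (mem_iUnion.mpr ⟨⟨b, hbB⟩, hbV⟩)
  exact ⟨hdense, htCi, hwt, ht⟩
end

section
/- Let X be a space with wt(X) = κ and let 𝒞 be a cover witnessing wt(X) = κ. Then for every x ∈ X there exists a 𝒞-saturated set S(x) ⊆ X with x ∈ S(x) and |S(x)| ≤ 2^κ. -/
open Cardinal Set TopologicalSpace

universe u

/-- Proposition 3.2. -/
theorem stmt8 {X : Type u} [TopologicalSpace X] (κ : Cardinal.{u}) (hκ : ℵ₀ ≤ κ)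
    (hwt : wt X = κ) (𝒞 : Set (Set X)) (h𝒞 : IsWtWitness κ 𝒞) :
    ∀ x : X, ∃ S : Set X, x ∈ S ∧ #S ≤ 2 ^ κ ∧ Saturated 𝒞 S := by
  obtain ⟨hcov, hcard, hC⟩ := h𝒞
  have h2κ : ℵ₀ ≤ 2 ^ κ := hκ.trans (Cardinal.cantor κ).le
  have hchoice : ∀ (y : X) (C : Set X), C ∈ 𝒞 →
      ∃ B : Set X, B ⊆ C ∧ #B ≤ 2 ^ κ ∧ y ∈ closure B := by
    intro y C hCmem
    have hy : y ∈ clk (2 ^ κ) C := (hC C hCmem).2 ▸ Set.mem_univ y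
    simp only [clk, Set.mem_iUnion] at hy
    obtain ⟨B, ⟨hB1, hB2⟩, hB3⟩ := hy
    exact ⟨B, hB1, hB2, hB3⟩
  choose! B hB1 hB2 hB3 using hchoice
  intro x
  set g : Set X → Set X := fun A => A ∪ ⋃ y ∈ A, ⋃ C ∈ 𝒞, B y C with hg
  set S : Set X := ⋃ n, g^[n] {x} with hS
  have hgcard : ∀ A : Set X, #A ≤ 2 ^ κ → #(g A) ≤ 2 ^ κ := by
    intro A hA
    have h1 : #(⋃ y ∈ A, ⋃ C ∈ 𝒞, B y C) ≤ 2 ^ κ := by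
      calc #(⋃ y ∈ A, ⋃ C ∈ 𝒞, B y C)
          ≤ #A * ⨆ y : A, #(⋃ C ∈ 𝒞, B y C) := Cardinal.mk_biUnion_le _ _
        _ ≤ (2 ^ κ) * (2 ^ κ) := by
            refine mul_le_mul' hA (ciSup_le' fun y => ?_)
            calc #(⋃ C ∈ 𝒞, B (y : X) C)
                ≤ #𝒞 * ⨆ C : 𝒞, #(B (y : X) C) := Cardinal.mk_biUnion_le _ _
              _ ≤ (2 ^ κ) * (2 ^ κ) := by
                  refine mul_le_mul' hcard (ciSup_le' fun C => ?_)
                  exact hB2 (y : X) (C : Set X) C.2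
              _ = 2 ^ κ := Cardinal.mul_eq_self h2κ
        _ = 2 ^ κ := Cardinal.mul_eq_self h2κ
    calc #(g A) ≤ #A + #(⋃ y ∈ A, ⋃ C ∈ 𝒞, B y C) := Cardinal.mk_union_le _ _
      _ ≤ 2 ^ κ + 2 ^ κ := add_le_add hA h1
      _ = 2 ^ κ := Cardinal.add_eq_self h2κ
  have hiter : ∀ n : ℕ, #(g^[n] ({x} : Set X)) ≤ 2 ^ κ := by
    intro n
    induction n with
    | zero => simpa using Cardinal.one_le_aleph0.trans h2κ
    | succ n ih => rw [Function.iterate_succ_apply']; exact hgcard _ ih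
  refine ⟨S, Set.mem_iUnion.2 ⟨0, by simp⟩, ?_, ?_⟩
  · have hle := Cardinal.mk_iUnion_le_lift (fun n : ℕ => g^[n] ({x} : Set X))
    simp only [Cardinal.lift_id', Cardinal.mk_nat, Cardinal.lift_aleph0] at hle
    rw [hS]
    calc #(⋃ n, g^[n] ({x} : Set X))
        ≤ ℵ₀ * ⨆ n : ℕ, #(g^[n] ({x} : Set X)) := hle
      _ ≤ 2 ^ κ * 2 ^ κ := mul_le_mul' h2κ (ciSup_le' hiter)
      _ = 2 ^ κ := Cardinal.mul_eq_self h2κ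
  · intro C hCmem y hy
    obtain ⟨n, hn⟩ := Set.mem_iUnion.1 hy
    have hsub : B y C ⊆ S ∩ C := by
      intro z hz
      refine ⟨Set.mem_iUnion.2 ⟨n + 1, ?_⟩, hB1 y C hCmem hz⟩
      rw [Function.iterate_succ_apply']
      exact Or.inr (Set.mem_biUnion hn (Set.mem_biUnion hCmem hz))
    exact closure_mono hsub (hB3 y C hCmem)
end
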